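/- The variety of quadruples (M1,M2,M3,M4) of 2×2 complex matrices satisfying det Mi = 0 for i = 1,2,3,4 and M1M2 = M2M3 = M3M4 = M4M1 = 0 has dimension 8 (as an affine algebraic set in ℂ¹⁶). -/

import Mathlib

open MvPolynomial

/-- The generic quadruple of 2×2 matrices, with entries the polynomial variables of the
coordinate ring `ℂ[ℂ¹⁶]`. -/
noncomputable def genMat (i : Fin 4) :
    Matrix (Fin 2) (Fin 2) (MvPolynomial (Fin 4 × Fin 2 × Fin 2) ℂ) :=
  Matrix.of fun a b => X (i, a, b)

/-- The ideal of the Kashiwara–Saito singularity: generated by `det Mᵢ` for `i ∈ ℤ/4` and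
the entries of the products `Mᵢ M_{i+1}` for `i ∈ ℤ/4` (cyclic indices). -/
noncomputable def KSideal : Ideal (MvPolynomial (Fin 4 × Fin 2 × Fin 2) ℂ) :=
  Ideal.span
    (Set.range (fun i : Fin 4 => (genMat i).det) ∪
      Set.range (fun p : Fin 4 × Fin 2 × Fin 2 => (genMat p.1 * genMat (p.1 + 1)) p.2.1 p.2.2))

/-!
Every point of the variety is a quadruple `Mᵢ = uᵢ wᵢᵀ` with `uᵢ` in one of the two affine
charts of `ℙ¹`. Since `Mᵢ M_{i+1} = (wᵢ ⬝ u_{i+1}) uᵢ w_{i+1}ᵀ`, either `wᵢ = sᵢ u_{i+1}^⊥`, or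
`M_{i+1} = 0` and `wᵢ` is arbitrary, its second coordinate taking over the unused scale `s_{i+1}`.
Hence the variety is covered by the images of finitely many polynomial maps `ℂ⁸ → ℂ¹⁶`. By the
Nullstellensatz every prime above the ideal contains the kernel of one of them, and elements
separating the steps of a chain of primes above such a kernel are algebraically independent in
`ℂ[t₁, …, t₈]`, so chains have length at most 8. Conversely, along the generic chart, setting the
eight parameters to zero one at a time gives a chain of primes of length 8.
-/

open Matrix

namespace MvPolynomial

variable (K : Type*) [CommSemiring K]

noncomputable def killBelow {n : ℕ} (k : ℕ) :
    MvPolynomial (Fin n) K →ₐ[K] MvPolynomial (Fin n) K :=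
  aeval fun j => if (j : ℕ) < k then 0 else X j

variable {K}

theorem killBelow_comp_killBelow {n k k' : ℕ} (h : k ≤ k') :
    (killBelow K (n := n) k').comp (killBelow K k) = killBelow K k' := by
  ext j : 1
  by_cases hj : (j : ℕ) < k <;> by_cases hj' : (j : ℕ) < k' <;> simp [killBelow, hj, hj']
  omega

end MvPolynomial

section

variable {K A : Type*} [Field K] [CommRing A] [Algebra K A]

theorem Polynomial.exists_ne_zero_map_mem_of_eval₂_mem {S : Type*} [CommRing S] (ψ : S →+* A)
    {P P' : Ideal A} [P.IsPrime] (hPP' : P ≤ P') {x : A} (hxP : x ∉ P) (hxP' : x ∈ P')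
    {p : Polynomial S} (hp : p ≠ 0) (h : p.eval₂ ψ x ∈ P) : ∃ c ≠ 0, ψ c ∈ P' := by
  obtain ⟨q, hpq, hq⟩ := p.exists_eq_pow_rootMultiplicity_mul_and_not_dvd hp 0
  rw [map_zero, sub_zero] at hpq hq
  refine ⟨q.coeff 0, Polynomial.X_dvd_iff.not.mp hq, ?_⟩
  have hqP : q.eval₂ ψ x ∈ P' := by
    rw [hpq, Polynomial.eval₂_mul, Polynomial.eval₂_X_pow] at h
    exact hPP' ((‹P.IsPrime›.mem_or_mem h).resolve_left fun hx =>
      hxP (‹P.IsPrime›.mem_of_pow_mem _ hx))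
  have hsplit : q.eval₂ ψ x = x * (q.divX.eval₂ ψ x) + ψ (q.coeff 0) := by
    conv_lhs => rw [← Polynomial.X_mul_divX_add q]
    rw [Polynomial.eval₂_add, Polynomial.eval₂_mul, Polynomial.eval₂_X, Polynomial.eval₂_C]
  rw [eq_sub_of_add_eq' hsplit.symm]
  exact P'.sub_mem hqP (P'.mul_mem_right _ hxP')

theorem MvPolynomial.eval₂_finSuccEquiv {n : ℕ} (f : Fin (n + 1) → A)
    (Q : MvPolynomial (Fin (n + 1)) K) :
    (finSuccEquiv K n Q).eval₂
      ((aeval (Fin.tail f) : MvPolynomial (Fin n) K →ₐ[K] A) : MvPolynomial (Fin n) K →+* A)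
      (f 0) = aeval f Q := by
  induction Q using MvPolynomial.induction_on with
  | C c => simp [finSuccEquiv_apply]
  | add p q hp hq => simp only [map_add, Polynomial.eval₂_add, hp, hq]
  | mul_X p i hp =>
    induction i using Fin.cases <;>
      simp [hp, finSuccEquiv_X_zero, finSuccEquiv_X_succ, Fin.tail]

theorem MvPolynomial.eq_zero_of_aeval_mem_of_primeChain :
    ∀ {n : ℕ} (q : Fin (n + 1) → Ideal A), (∀ i, (q i).IsPrime) → Monotone q →
    ∀ (f : Fin n → A), (∀ i, f i ∈ q i.succ) → (∀ i, f i ∉ q i.castSucc) →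
    ∀ Q : MvPolynomial (Fin n) K, aeval f Q ∈ q 0 → Q = 0
  | 0, q, hq, _, f, _, _, Q, hQ => by
    obtain ⟨c, rfl⟩ := C_surjective (Fin 0) Q
    rw [aeval_C] at hQ
    by_contra hc
    exact (hq 0).ne_top (Ideal.eq_top_of_isUnit_mem _ hQ
      ((isUnit_iff_ne_zero.mpr fun h => hc (by rw [h, map_zero])).map _))
  | n + 1, q, hq, hmono, f, hf, hf', Q, hQ => by
    -- Expand `Q` in the first variable: `f 0 ∉ q 0` strips powers of it, and `f 0 ∈ q 1` leaves
    -- a nonzero coefficient evaluating into `q 1`, a contradiction for the shorter chain.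
    by_contra hQ0
    have := hq 0
    rw [← eval₂_finSuccEquiv] at hQ
    obtain ⟨c, hc, hcq⟩ :=
      Polynomial.exists_ne_zero_map_mem_of_eval₂_mem _ (hmono (Fin.zero_le 1)) (hf' 0) (hf 0)
        ((map_ne_zero_iff _ (finSuccEquiv K n).injective).mpr hQ0) hQ
    exact hc (eq_zero_of_aeval_mem_of_primeChain (Fin.tail q) (fun i => hq _)
      (hmono.comp Fin.strictMono_succ.monotone) (Fin.tail f) (fun i => hf i.succ)
      (fun i => by simpa [Fin.tail] using hf' i.succ) c hcq)

theorem LTSeries.length_le_of_ker_le {n : ℕ} (φ : A →ₐ[K] MvPolynomial (Fin n) K)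
    (l : LTSeries (PrimeSpectrum A)) (hl : RingHom.ker φ ≤ l.head.asIdeal) : l.length ≤ n := by
  obtain ⟨f, hf⟩ : ∃ f : Fin l.length → A, ∀ i,
      f i ∈ (l i.succ).asIdeal ∧ f i ∉ (l i.castSucc).asIdeal :=
    ⟨_, fun i => (SetLike.exists_of_lt (l.step i)).choose_spec⟩
  have hind : AlgebraicIndependent K (φ ∘ f) := by
    refine algebraicIndependent_iff.mpr fun Q hQ => ?_
    refine eq_zero_of_aeval_mem_of_primeChain (fun i => (l i).asIdeal) (fun i => (l i).isPrime)
      (fun i j hij => l.monotone hij) f (fun i => (hf i).1) (fun i => (hf i).2) Q (hl ?_)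
    rwa [RingHom.mem_ker, MvPolynomial.comp_aeval_apply]
  simpa using hind.lift_cardinalMk_le_trdeg

theorem ringKrullDim_quotient_le_of_forall_exists_ker_le {ι : Type*} {n : ℕ}
    (φ : ι → A →ₐ[K] MvPolynomial (Fin n) K) {I : Ideal A}
    (h : ∀ P : Ideal A, P.IsPrime → I ≤ P → ∃ i, RingHom.ker (φ i) ≤ P) :
    ringKrullDim (A ⧸ I) ≤ n := by
  rw [ringKrullDim_quotient]
  refine iSup_le fun l => ?_
  obtain ⟨i, hi⟩ := h _ l.head.1.isPrime l.head.2
  exact_mod_cast (l.map Subtype.val fun _ _ h => h).length_le_of_ker_le (φ i) hi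

theorem natCast_le_ringKrullDim_quotient_of_killBelow {n : ℕ}
    (φ : A →ₐ[K] MvPolynomial (Fin n) K) {I : Ideal A} (hI : I ≤ RingHom.ker φ)
    (hsep : ∀ k : Fin n, ∃ a, killBelow K (k + 1) (φ a) = 0 ∧ killBelow K k (φ a) ≠ 0) :
    n ≤ ringKrullDim (A ⧸ I) := by
  let P (k : Fin (n + 1)) : PrimeSpectrum.zeroLocus (I : Set A) :=
    ⟨⟨RingHom.ker ((killBelow K k).comp φ), RingHom.ker_isPrime _⟩,
      hI.trans fun a ha => by simp_all [RingHom.mem_ker]⟩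
  have hP : StrictMono P := Fin.strictMono_iff_lt_succ.mpr fun k => by
    obtain ⟨a, ha, ha'⟩ := hsep k
    show (P k.castSucc).1.asIdeal < (P k.succ).1.asIdeal
    refine SetLike.lt_iff_le_and_exists.mpr ⟨fun b hb => ?_, a, by simpa [P] using ha,
      by simpa [P] using ha'⟩
    have := congr($(killBelow_comp_killBelow (K := K) (n := n) (Nat.le_succ k)) (φ b))
    simp_all [P, RingHom.mem_ker]
  rw [ringKrullDim_quotient]
  exact_mod_cast Order.LTSeries.length_le_krullDim (LTSeries.mk n P hP)

end

theorem MvPolynomial.exists_le_of_zeroLocus_subset_iUnion {k σ ι : Type*} [Field k]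
    [IsAlgClosed k] [Finite σ] [Fintype ι] {I P : Ideal (MvPolynomial σ k)} [hP : P.IsPrime]
    (hIP : I ≤ P) (J : ι → Ideal (MvPolynomial σ k))
    (hcover : zeroLocus k I ⊆ ⋃ i, zeroLocus k (J i)) : ∃ i, J i ≤ P := by
  have hprod : ∏ i, J i ≤ I.radical := by
    rw [← vanishingIdeal_zeroLocus_eq_radical (K := k)]
    intro g hg
    rw [mem_vanishingIdeal_iff]
    intro x hx
    obtain ⟨i, hi⟩ := Set.mem_iUnion.mp (hcover hx)
    exact hi g (Ideal.prod_le_inf.trans (Finset.inf_le (Finset.mem_univ i)) hg)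
  obtain ⟨i, -, hi⟩ := hP.prod_le.mp (hprod.trans (hP.radical_le_iff.mpr hIP))
  exact ⟨i, hi⟩

namespace KashiwaraSaito

section Vectors

variable {R S : Type*} [CommRing R] [CommRing S]

def affineVec (e : Bool) (a : R) : Fin 2 → R := if e then ![1, a] else ![a, 1]

def perpVec (u : Fin 2 → R) : Fin 2 → R := ![-u 1, u 0]

theorem perpVec_dotProduct (u : Fin 2 → R) : perpVec u ⬝ᵥ u = 0 := by
  simp only [dotProduct, perpVec, Fin.sum_univ_two, cons_val_zero, cons_val_one]
  ring

theorem map_affineVec (f : R →+* S) (e : Bool) (a : R) :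
    f ∘ affineVec e a = affineVec e (f a) := by
  ext j; fin_cases j <;> cases e <;> simp [affineVec]

theorem map_perpVec (f : R →+* S) (u : Fin 2 → R) : f ∘ perpVec u = perpVec (f ∘ u) := by
  ext j; fin_cases j <;> simp [perpVec]

theorem affineVec_ne_zero [Nontrivial R] (e : Bool) (a : R) : affineVec e a ≠ 0 := by
  intro h
  cases e
  · simpa [affineVec] using congr_fun h 1
  · simpa [affineVec] using congr_fun h 0

theorem eq_smul_perpVec_of_dotProduct_eq_zero {e : Bool} {a : R} {w : Fin 2 → R}
    (h : w ⬝ᵥ affineVec e a = 0) :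
    w = (if e then w 1 else -w 0) • perpVec (affineVec e a) := by
  simp only [dotProduct, Fin.sum_univ_two] at h
  ext j; fin_cases j <;> cases e <;> simp [affineVec, perpVec] at h ⊢ <;> linear_combination h

end Vectors

/-- A chart of the cyclic chains `Mᵢ M_{i+1} = 0` of rank-one `2 × 2` matrices, written as
`Mᵢ = uᵢ wᵢᵀ` with parameters `αᵢ, sᵢ` and `uᵢ = affineVec (orient i) αᵢ`: at a free
position `wᵢ = (sᵢ, s_{i+1})` and `M_{i+1} = 0`, otherwise `wᵢ = sᵢ u_{i+1}^⊥`. -/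
structure Chart (n : ℕ) [NeZero n] where
  orient : Fin n → Bool
  free : Fin n → Bool
  free_succ : ∀ i, free i → free (i + 1) = false
deriving Fintype

namespace Chart

variable {n : ℕ} [NeZero n] (δ : Chart n) {R S : Type*} [CommRing R] [CommRing S]

def u (α : Fin n → R) (i : Fin n) : Fin 2 → R := affineVec (δ.orient i) (α i)

def w (α s : Fin n → R) (i : Fin n) : Fin 2 → R :=
  if δ.free i then ![s i, s (i + 1)]
  else if δ.free (i - 1) then 0
  else s i • perpVec (δ.u α (i + 1))

def mat (α s : Fin n → R) (i : Fin n) : Matrix (Fin 2) (Fin 2) R :=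
  vecMulVec (δ.u α i) (δ.w α s i)

theorem det_mat (α s : Fin n → R) (i : Fin n) : (δ.mat α s i).det = 0 := by
  rw [mat, det_fin_two]
  simp only [vecMulVec_apply]
  ring

theorem mat_mul_mat_add_one (α s : Fin n → R) (i : Fin n) :
    δ.mat α s i * δ.mat α s (i + 1) = 0 := by
  have : δ.w α s i ⬝ᵥ δ.u α (i + 1) = 0 ∨ δ.w α s (i + 1) = 0 := by
    by_cases hi : δ.free i
    · simp [w, hi, δ.free_succ i hi]
    by_cases hi' : δ.free (i - 1)
    · simp [w, hi, hi']
    · rw [w, if_neg hi, if_neg hi', smul_dotProduct, perpVec_dotProduct, smul_zero]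
      exact .inl rfl
  rw [mat, mat, vecMulVec_mul_vecMulVec]
  rcases this with h | h <;> simp [h]

theorem map_mat (f : R →+* S) (α s : Fin n → R) (i : Fin n) :
    (δ.mat α s i).map f = δ.mat (f ∘ α) (f ∘ s) i := by
  have hu (i : Fin n) : f ∘ δ.u α i = δ.u (f ∘ α) i := map_affineVec f _ _
  have hw : f ∘ δ.w α s i = δ.w (f ∘ α) (f ∘ s) i := by
    unfold w
    split_ifs
    · ext j; fin_cases j <;> simp
    · ext j; simp
    · ext j; simp [← hu, ← map_perpVec f]
  ext a b
  simp [mat, vecMulVec_apply, ← hu, ← hw]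

end Chart

theorem exists_eq_vecMulVec_affineVec {K : Type*} [Field K] (N : Matrix (Fin 2) (Fin 2) K)
    (h : N.det = 0) : ∃ e a w, N = vecMulVec (affineVec e a) w := by
  rw [det_fin_two] at h
  by_cases h0 : N 0 = 0
  · refine ⟨false, 0, N 1, ?_⟩
    ext i j; fin_cases i <;> simp [affineVec, vecMulVec_apply, h0]
  obtain ⟨a, ha⟩ : ∃ a, N 1 = a • N 0 := by
    by_cases h00 : N 0 0 = 0
    · have h01 : N 0 1 ≠ 0 := fun h01 => h0 (by ext j; fin_cases j <;> simp [h00, h01])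
      refine ⟨N 1 1 / N 0 1, ?_⟩
      ext j; fin_cases j <;> field_simp <;> simp_all
    · refine ⟨N 1 0 / N 0 0, ?_⟩
      ext j; fin_cases j
      · simp [h00]
      · simp only [Fin.mk_one, Pi.smul_apply, smul_eq_mul]
        field_simp
        linear_combination h
  refine ⟨true, a, N 0, ?_⟩
  ext i j; fin_cases i <;> simp [affineVec, vecMulVec_apply, ha]

theorem Chart.exists_mat_eq {K : Type*} [Field K] {n : ℕ} [NeZero n]
    (N : Fin n → Matrix (Fin 2) (Fin 2) K) (hdet : ∀ i, (N i).det = 0)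
    (hmul : ∀ i, N i * N (i + 1) = 0) :
    ∃ (δ : Chart n) (α s : Fin n → K), ∀ i, N i = δ.mat α s i := by
  classical
  choose e α w hN using fun i => exists_eq_vecMulVec_affineVec (N i) (hdet i)
  have hsucc (i : Fin n) :
      w i ⬝ᵥ affineVec (e (i + 1)) (α (i + 1)) ≠ 0 → w (i + 1) = 0 := by
    have := hmul i
    rw [hN, hN, vecMulVec_mul_vecMulVec, vecMulVec_eq_zero, smul_eq_zero] at this
    exact (this.resolve_left (affineVec_ne_zero _ _)).resolve_left
  let δ : Chart n :=
    { orient := e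
      free i := decide (w i ⬝ᵥ affineVec (e (i + 1)) (α (i + 1)) ≠ 0)
      free_succ i hi := by
        rw [decide_eq_true_iff] at hi
        rw [hsucc i hi, zero_dotProduct, decide_eq_false_iff_not, not_not] }
  refine ⟨δ, α, fun i => if δ.free i then w i 0 else if δ.free (i - 1) then w (i - 1) 1
    else if e (i + 1) then w i 1 else -w i 0, fun i => ?_⟩
  rw [hN, Chart.mat]
  congr 1
  unfold Chart.w
  by_cases hi : δ.free i
  · simp only [hi, δ.free_succ i hi, add_sub_cancel_right]
    ext j; fin_cases j <;> simp
  by_cases hi' : δ.free (i - 1)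
  · simp only [hi, hi']
    simpa using hsucc (i - 1) (by simpa [δ] using hi')
  · simp only [hi, hi']
    exact eq_smul_perpVec_of_dotProduct_eq_zero (by simpa [δ] using hi)

theorem KSideal_le_ker_iff {B : Type*} [CommRing B] [Algebra ℂ B]
    (ψ : MvPolynomial (Fin 4 × Fin 2 × Fin 2) ℂ →ₐ[ℂ] B) :
    KSideal ≤ RingHom.ker ψ ↔
      ∀ i, ((genMat i).map ψ).det = 0 ∧ (genMat i).map ψ * (genMat (i + 1)).map ψ = 0 := by
  simp only [KSideal, Ideal.span_le, Set.union_subset_iff, Set.range_subset_iff, SetLike.mem_coe,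
    RingHom.mem_ker, AlgHom.map_det, ← Matrix.map_mul, ← Matrix.ext_iff, Prod.forall,
    Matrix.map_apply, Matrix.zero_apply, ← forall_and]
  rfl

noncomputable def chartHom (δ : Chart 4) :
    MvPolynomial (Fin 4 × Fin 2 × Fin 2) ℂ →ₐ[ℂ] MvPolynomial (Fin 8) ℂ :=
  aeval fun p => δ.mat (fun i => X (Fin.castAdd 4 i)) (fun i => X (Fin.natAdd 4 i)) p.1 p.2.1 p.2.2

theorem genMat_map_chartHom (δ : Chart 4) (i : Fin 4) :
    (genMat i).map (chartHom δ) =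
      δ.mat (fun i => X (Fin.castAdd 4 i)) (fun i => X (Fin.natAdd 4 i)) i := by
  ext a b
  simp [genMat, chartHom]

theorem KSideal_le_ker_chartHom (δ : Chart 4) : KSideal ≤ RingHom.ker (chartHom δ) :=
  (KSideal_le_ker_iff _).mpr fun i => by
    simp only [genMat_map_chartHom]
    exact ⟨δ.det_mat _ _ i, δ.mat_mul_mat_add_one _ _ i⟩

theorem zeroLocus_KSideal_subset :
    zeroLocus ℂ KSideal ⊆ ⋃ δ : Chart 4, zeroLocus ℂ (RingHom.ker (chartHom δ)) := by
  intro x hx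
  have hN := (KSideal_le_ker_iff (aeval x)).mp hx
  obtain ⟨δ, α, s, hmat⟩ := Chart.exists_mat_eq _ (fun i => (hN i).1) (fun i => (hN i).2)
  let ev : MvPolynomial (Fin 8) ℂ →ₐ[ℂ] ℂ := aeval (Fin.append α s)
  have hx : aeval x = ev.comp (chartHom δ) := by
    ext ⟨i, a, b⟩
    have := δ.map_mat ev.toRingHom
      (fun i => X (Fin.castAdd 4 i)) (fun i => X (Fin.natAdd 4 i)) i
    have hα : ev.toRingHom ∘ (fun i => X (Fin.castAdd 4 i)) = α := by
      ext j; exact (aeval_X _ _).trans (Fin.append_left α s j)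
    have hs : ev.toRingHom ∘ (fun i => X (Fin.natAdd 4 i)) = s := by
      ext j; exact (aeval_X _ _).trans (Fin.append_right α s j)
    rw [hα, hs, ← hmat, ← genMat_map_chartHom] at this
    simpa [genMat] using congr($this a b).symm
  refine Set.mem_iUnion.mpr ⟨δ, fun g hg => ?_⟩
  rw [hx, AlgHom.comp_apply, RingHom.mem_ker.mp hg, map_zero]

theorem ringKrullDim_quotient_KSideal_le :
    ringKrullDim (MvPolynomial (Fin 4 × Fin 2 × Fin 2) ℂ ⧸ KSideal) ≤ 8 :=
  ringKrullDim_quotient_le_of_forall_exists_ker_le chartHom fun _ _ hP =>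
    exists_le_of_zeroLocus_subset_iUnion hP _ zeroLocus_KSideal_subset

theorem eight_le_ringKrullDim_quotient_KSideal :
    8 ≤ ringKrullDim (MvPolynomial (Fin 4 × Fin 2 × Fin 2) ℂ ⧸ KSideal) := by
  let δ : Chart 4 := ⟨fun _ => true, fun _ => false, fun _ h => absurd h Bool.false_ne_true⟩
  have hX01 (i : Fin 4) : chartHom δ (X (i, 0, 1)) = X (Fin.natAdd 4 i) := by
    simp [chartHom, δ, Chart.mat, Chart.u, Chart.w, affineVec, perpVec, vecMulVec_apply]
  have hX11 (i : Fin 4) :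
      chartHom δ (X (i, 1, 1)) = X (Fin.castAdd 4 i) * X (Fin.natAdd 4 i) := by
    simp [chartHom, δ, Chart.mat, Chart.u, Chart.w, affineVec, perpVec, vecMulVec_apply]
  refine le_of_eq_of_le (by norm_num) (natCast_le_ringKrullDim_quotient_of_killBelow (chartHom δ)
    (KSideal_le_ker_chartHom δ) fun k => ?_)
  refine Fin.addCases (m := 4) (n := 4) (motive := fun k => ∃ a, killBelow ℂ (k + 1)
    (chartHom δ a) = 0 ∧ killBelow ℂ k (chartHom δ a) ≠ 0) (fun i => ?_) (fun i => ?_) k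
  · exact ⟨X (i, 1, 1), by simp [hX11, killBelow], by simp [hX11, killBelow, X_ne_zero]⟩
  · exact ⟨X (i, 0, 1), by simp [hX01, killBelow], by simp [hX01, killBelow, X_ne_zero]⟩

end KashiwaraSaito

/-- The Kashiwara–Saito singularity has dimension 8: the Krull dimension of its coordinate
ring (equivalently, of the zero set in `ℂ¹⁶`) is 8. -/
theorem stmt_17 :
    ringKrullDim (MvPolynomial (Fin 4 × Fin 2 × Fin 2) ℂ ⧸ KSideal) = 8 :=
  le_antisymm KashiwaraSaito.ringKrullDim_quotient_KSideal_le
    KashiwaraSaito.eight_le_ringKrullDim_quotient_KSideal
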